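/- Characterization of good-window values (upper bound direction): in a finite non-stochastic game, for every vertex v, every i ≥ 1, and every Player-1 strategy, there exists a Player-2 strategy such that for all 1 ≤ j ≤ i, the total payoff of the first j edges of the resulting play from v is at most C_i(v). -/
import Mathlib


/-- A non-stochastic two-player game on a finite directed graph without deadlocks. -/
structure NSGame (V : Type) [DecidableEq V] [Fintype V] where
  E : V → Finset V
  nonempty : ∀ v, (E v).Nonempty
  isP1 : V → Bool
  w : V → V → ℚ

variable {V : Type} [DecidableEq V] [Fintype V]

/-- The good-window values `C_i(v)`. -/
def gwVal (G : NSGame V) : ℕ → V → ℚ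
  | 0, _ => 0
  | i + 1, v =>
    if G.isP1 v then
      ((G.E v).image fun v' => max (G.w v v') (G.w v v' + gwVal G i v')).max'
        ((G.nonempty v).image _)
    else
      ((G.E v).image fun v' => max (G.w v v') (G.w v v' + gwVal G i v')).min'
        ((G.nonempty v).image _)

/-- The history (as a list of vertices) after `n` steps, starting from `v`, when
Player 1 follows `σ1` and Player 2 follows `σ2` (each reads the full history). -/
def histList (G : NSGame V) (σ1 σ2 : List V → V) (v : V) : ℕ → List V
  | 0 => [v]
  | n + 1 =>
    let h := histList G σ1 σ2 v n
    h ++ [if G.isP1 (h.getLastD v) then σ1 h else σ2 h]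

/-- The vertex occupied at step `n` of the play from `v` under strategies `σ1, σ2`. -/
def playAt (G : NSGame V) (σ1 σ2 : List V → V) (v : V) (n : ℕ) : V :=
  (histList G σ1 σ2 v n).getLastD v

/-- A strategy is valid if it always chooses an out-neighbour of the current vertex. -/
def ValidStrat (G : NSGame V) (σ : List V → V) : Prop :=
  ∀ l : List V, ∀ u : V, l.getLast? = some u → σ l ∈ G.E u

lemma histList_ne_nil (G : NSGame V) (σ1 σ2 : List V → V) (v : V) (n : ℕ) :
    histList G σ1 σ2 v n ≠ [] := by
  cases n <;> simp [histList]

lemma getLastD_ne_nil {l : List V} (h : l ≠ []) (a b : V) :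
    l.getLastD a = l.getLastD b := by
  cases l with
  | nil => exact absurd rfl h
  | cons x xs => rw [List.getLastD_cons, List.getLastD_cons]

lemma getLast?_of_ne_nil {l : List V} (h : l ≠ []) (a : V) :
    l.getLast? = some (l.getLastD a) := by
  induction l generalizing a with
  | nil => exact absurd rfl h
  | cons x xs ih =>
    rw [List.getLastD_cons]
    cases xs with
    | nil => rfl
    | cons y ys => rw [List.getLast?_cons_cons]; exact ih (by simp) x

lemma hist_shift (G : NSGame V) (σ1 σ2 σ1' σ2' : List V → V) (v v' : V)
    (h1 : ∀ l : List V, l ≠ [] → σ1 (v :: l) = σ1' l)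
    (h2 : ∀ l : List V, l ≠ [] → σ2 (v :: l) = σ2' l)
    (h0 : (if G.isP1 v then σ1 [v] else σ2 [v]) = v') :
    ∀ n, histList G σ1 σ2 v (n + 1) = v :: histList G σ1' σ2' v' n := by
  intro n
  induction n with
  | zero =>
    show [v] ++ [if G.isP1 (([v] : List V).getLastD v) then σ1 [v] else σ2 [v]]
        = v :: [v']
    rw [show ([v] : List V).getLastD v = v from rfl, h0]
    rfl
  | succ n ih =>
    have hne := histList_ne_nil G σ1' σ2' v' n
    show (histList G σ1 σ2 v (n + 1)) ++ [_] = v :: ((histList G σ1' σ2' v' n) ++ [_])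
    rw [ih]
    set H := histList G σ1' σ2' v' n with hH
    have hlast : (v :: H).getLastD v = H.getLastD v' := by
      rw [List.getLastD_cons]; exact getLastD_ne_nil hne v v'
    rw [hlast]
    by_cases hp : G.isP1 (H.getLastD v')
    · rw [if_pos hp, if_pos hp, h1 H hne]; rfl
    · rw [if_neg hp, if_neg hp, h2 H hne]; rfl

lemma aux_main (G : NSGame V) : ∀ (i : ℕ) (v : V) (σ1 : List V → V), ValidStrat G σ1 →
    ∃ σ2 : List V → V, ValidStrat G σ2 ∧
      ∀ j, 1 ≤ j → j ≤ i →
        (∑ k ∈ Finset.range j,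
            G.w (playAt G σ1 σ2 v k) (playAt G σ1 σ2 v (k + 1))) ≤ gwVal G i v := by
  intro i
  induction i with
  | zero =>
    intro v σ1 _
    refine ⟨fun l => (G.nonempty (l.getLastD v)).choose, ?_, ?_⟩
    · intro l u hl
      have hne : l ≠ [] := by intro h; rw [h] at hl; simp at hl
      have : l.getLastD v = u := by
        have := getLast?_of_ne_nil hne v
        rw [hl] at this; exact (Option.some_injective _ this).symm
      show (G.nonempty (l.getLastD v)).choose ∈ G.E u
      rw [this]
      exact (G.nonempty u).choose_spec
    · intro j hj hj'; omega
  | succ i ih =>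
    intro v σ1 hσ1
    obtain ⟨v', hmem, hle, hp1⟩ :
        ∃ v' ∈ G.E v, max (G.w v v') (G.w v v' + gwVal G i v') ≤ gwVal G (i + 1) v ∧
          (G.isP1 v = true → σ1 [v] = v') := by
      by_cases hp : G.isP1 v
      · refine ⟨σ1 [v], hσ1 [v] v rfl, ?_, fun _ => rfl⟩
        rw [gwVal, if_pos hp]
        exact Finset.le_max' _ _
          (Finset.mem_image_of_mem (fun v' => max (G.w v v') (G.w v v' + gwVal G i v'))
            (hσ1 [v] v rfl))
      · have hmm := Finset.min'_mem
          ((G.E v).image fun v' => max (G.w v v') (G.w v v' + gwVal G i v'))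
          ((G.nonempty v).image _)
        rw [Finset.mem_image] at hmm
        obtain ⟨v', hv', heq⟩ := hmm
        refine ⟨v', hv', ?_, fun h => absurd h (by simp [hp])⟩
        rw [gwVal, if_neg hp, heq]
    set σ1' : List V → V := fun l => σ1 (v :: l) with hσ1'def
    have hσ1'valid : ValidStrat G σ1' := by
      intro l u hl
      apply hσ1 (v :: l) u
      cases l with
      | nil => simp at hl
      | cons x xs => rw [← hl]; rfl
    obtain ⟨σ2', hσ2'valid, hsum'⟩ := ih v' σ1' hσ1'valid
    set σ2 : List V → V := fun l =>
      match l with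
      | [] => v'
      | [u] => if u = v then v' else (G.nonempty u).choose
      | _ :: b :: rest => σ2' (b :: rest) with hσ2def
    have hσ2valid : ValidStrat G σ2 := by
      intro l u hl
      match l with
      | [] => simp at hl
      | [a] =>
        show (if a = v then v' else (G.nonempty a).choose) ∈ G.E u
        have hau : a = u := by simpa using hl
        rw [← hau]
        split
        · next h => rw [h]; exact hmem
        · exact (G.nonempty a).choose_spec
      | a :: b :: rest =>
        have : (b :: rest).getLast? = some u := by
          rw [← hl, List.getLast?_cons_cons]
        exact hσ2'valid (b :: rest) u this
    have hshift := hist_shift G σ1 σ2 σ1' σ2' v v'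
      (fun l _ => rfl)
      (by intro l hne; match l with
          | [] => exact absurd rfl hne
          | b :: rest => rfl)
      (by by_cases hp : G.isP1 v
          · rw [if_pos hp]; exact hp1 hp
          · rw [if_neg hp]; show (if v = v then v' else _) = v'; rw [if_pos rfl])
    have hplay0 : playAt G σ1 σ2 v 0 = v := rfl
    have hplay : ∀ k, playAt G σ1 σ2 v (k + 1) = playAt G σ1' σ2' v' k := by
      intro k
      unfold playAt
      rw [hshift k, List.getLastD_cons]
      exact getLastD_ne_nil (histList_ne_nil G σ1' σ2' v' k) v v'
    refine ⟨σ2, hσ2valid, ?_⟩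
    intro j hj hji
    match j, hj with
    | j' + 1, _ =>
      rw [Finset.sum_range_succ']
      simp only [hplay, hplay0]
      have hedge : ∀ x ∈ Finset.range j',
          G.w (playAt G σ1' σ2' v' x) (playAt G σ1' σ2' v' (x + 1)) =
          G.w (playAt G σ1' σ2' v' x) (playAt G σ1' σ2' v' (x + 1)) := fun _ _ => rfl
      match j' with
      | 0 =>
        simp only [Finset.range_zero, Finset.sum_empty, zero_add]
        exact le_trans (le_max_left _ _) hle
      | j'' + 1 =>
        have h1 : (∑ k ∈ Finset.range (j'' + 1),
            G.w (playAt G σ1' σ2' v' k) (playAt G σ1' σ2' v' (k + 1))) ≤ gwVal G i v' :=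
          hsum' (j'' + 1) (by omega) (by omega)
        calc (∑ k ∈ Finset.range (j'' + 1),
                G.w (playAt G σ1' σ2' v' k) (playAt G σ1' σ2' v' (k + 1))) + G.w v v'
            ≤ gwVal G i v' + G.w v v' := by linarith
          _ = G.w v v' + gwVal G i v' := by ring
          _ ≤ max (G.w v v') (G.w v v' + gwVal G i v') := le_max_right _ _
          _ ≤ gwVal G (i + 1) v := hle

/-- Upper-bound characterization of the good-window values: against every Player-1
strategy, Player 2 has a strategy such that for all `1 ≤ j ≤ i` the total payoff of
the first `j` edges of the play from `v` is at most `C_i(v)`. -/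
theorem stmt_16 (G : NSGame V) (v : V) (i : ℕ) (hi : 1 ≤ i) :
    ∀ σ1 : List V → V, ValidStrat G σ1 →
      ∃ σ2 : List V → V, ValidStrat G σ2 ∧
        ∀ j, 1 ≤ j → j ≤ i →
          (∑ k ∈ Finset.range j,
              G.w (playAt G σ1 σ2 v k) (playAt G σ1 σ2 v (k + 1))) ≤
            gwVal G i v := by
  intro σ1 hσ1
  exact aux_main G i v σ1 hσ1
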